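/- Let n ≥ 1 and γ ≥ 0, let ρ : ℝⁿ → ℝ be continuous with ρ(x) > 0 for all x, let d* : ℝⁿ → ℝ be continuous, and let χ : ℝⁿ → ℝ be continuous with compact support. Assume that x ↦ d*(x)·ρ(x) and x ↦ ρ(x)·log ρ(x) are Lebesgue-integrable on ℝⁿ. Then the function ε ↦ −∫_{ℝⁿ} d*(x)·(ρ(x)+ε·χ(x)) dx + γ·∫_{ℝⁿ} (ρ(x)+ε·χ(x))·log(ρ(x)+ε·χ(x)) dx has derivative at ε = 0 equal to ∫_{ℝⁿ} ( −d*(x) + γ·log ρ(x) + γ )·χ(x) dx. -/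

import Mathlib

/-!
For `|ε|` small the perturbation `ε χ` stays below `ρ / 2` everywhere, because `χ / ρ` is
continuous with compact support, hence bounded. Then `log (ρ + ε χ)` differs from `log ρ` by at
most `log 2`, so the `ε`-derivative `χ (log (ρ + ε χ) + 1)` of the entropy integrand is dominated
by the integrable function `|χ| (|log ρ| + log 2 + 1)` and may be taken under the integral.
The critic term is affine in `ε`.
-/

open MeasureTheory Real Filter Topology

lemma abs_log_add_le_of_abs_le_half {r h : ℝ} (hr : 0 < r) (hh : |h| ≤ r / 2) :
    |log (r + h)| ≤ |log r| + log 2 := by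
  obtain ⟨hlo, hhi⟩ := abs_le.1 hh
  have hlower : log r - log 2 ≤ log (r + h) := by
    rw [← log_div hr.ne' two_ne_zero]
    exact log_le_log (by positivity) (by linarith)
  have hupper : log (r + h) ≤ log r + log 2 := by
    rw [add_comm (log r), ← log_mul two_ne_zero hr.ne']
    exact log_le_log (by linarith) (by linarith)
  rw [abs_le]
  constructor <;> linarith [neg_abs_le (log r), le_abs_self (log r)]

lemma hasDerivAt_integral_add_mul {α : Type*} [MeasurableSpace α] {μ : Measure α}
    {f g : α → ℝ} (hf : Integrable f μ) (hg : Integrable g μ) (ε₀ : ℝ) :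
    HasDerivAt (fun ε : ℝ => ∫ x, f x + ε * g x ∂μ) (∫ x, g x ∂μ) ε₀ := by
  have haffine :
      (fun ε : ℝ => ∫ x, f x + ε * g x ∂μ) = fun ε => (∫ x, f x ∂μ) + ε * ∫ x, g x ∂μ :=
    funext fun ε => by rw [integral_add hf (hg.const_mul ε), integral_const_mul]
  rw [haffine]
  simpa using ((hasDerivAt_id ε₀).mul_const (∫ x, g x ∂μ)).const_add (∫ x, f x ∂μ)

section Perturbation

variable {α : Type*} [TopologicalSpace α] {ρ χ : α → ℝ}

lemma eventually_abs_mul_le_half (hρc : Continuous ρ) (hρpos : ∀ x, 0 < ρ x)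
    (hχc : Continuous χ) (hχsupp : HasCompactSupport χ) :
    ∀ᶠ ε : ℝ in 𝓝 0, ∀ x, |ε * χ x| ≤ ρ x / 2 := by
  obtain ⟨C, hC⟩ := (hχc.mul (hρc.inv₀ fun x => (hρpos x).ne')).bounded_above_of_compact_support
    (hχsupp.mul_right (f' := fun x => (ρ x)⁻¹))
  have hsmall : ∀ᶠ ε : ℝ in 𝓝 0, |ε| * C < 1 / 2 :=
    (continuous_abs.mul continuous_const).tendsto' (0 : ℝ) 0 (by simp)
      |>.eventually_lt_const (by norm_num)
  filter_upwards [hsmall] with ε hε x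
  have hratio : |χ x| = |χ x * (ρ x)⁻¹| * ρ x := by
    rw [abs_mul, abs_inv, abs_of_pos (hρpos x), inv_mul_cancel_right₀ (hρpos x).ne']
  calc |ε * χ x| = |ε| * |χ x * (ρ x)⁻¹| * ρ x := by rw [abs_mul, hratio, mul_assoc]
    _ ≤ |ε| * C * ρ x := by
      gcongr
      · exact (hρpos x).le
      · exact hC x
    _ ≤ ρ x / 2 := by nlinarith [hρpos x]

variable [MeasurableSpace α] [OpensMeasurableSpace α] {μ : Measure α}
  [IsFiniteMeasureOnCompacts μ]

lemma hasDerivAt_integral_mul_log_add_mul (hρc : Continuous ρ) (hρpos : ∀ x, 0 < ρ x)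
    (hχc : Continuous χ) (hχsupp : HasCompactSupport χ)
    (hint : Integrable (fun x => ρ x * log (ρ x)) μ) :
    HasDerivAt (fun ε : ℝ => ∫ x, (ρ x + ε * χ x) * log (ρ x + ε * χ x) ∂μ)
      (∫ x, (log (ρ x) + 1) * χ x ∂μ) 0 := by
  set s := {ε : ℝ | ∀ x, |ε * χ x| ≤ ρ x / 2}
  have hs : s ∈ 𝓝 0 := eventually_abs_mul_le_half hρc hρpos hχc hχsupp
  have hperturbed_pos : ∀ ε ∈ s, ∀ x, 0 < ρ x + ε * χ x := fun ε hε x => by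
    linarith [neg_abs_le (ε * χ x), hε x, hρpos x]
  have hlogρ : Continuous fun x => log (ρ x) := hρc.log fun x => (hρpos x).ne'
  have hperturbed : ∀ ε : ℝ, Continuous fun x => ρ x + ε * χ x := fun ε =>
    hρc.add (continuous_const.mul hχc)
  suffices HasDerivAt (fun ε : ℝ => ∫ x, (ρ x + ε * χ x) * log (ρ x + ε * χ x) ∂μ)
      (∫ x, (log (ρ x + 0 * χ x) + 1) * χ x ∂μ) 0 by simpa using this
  refine (hasDerivAt_integral_of_dominated_loc_of_deriv_le
    (F := fun ε x => (ρ x + ε * χ x) * log (ρ x + ε * χ x))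
    (F' := fun ε x => (log (ρ x + ε * χ x) + 1) * χ x)
    (bound := fun x => (|log (ρ x)| + log 2 + 1) * |χ x|) hs ?_ (by simpa using hint) ?_ ?_ ?_ ?_).2
  · filter_upwards [hs] with ε hε
    exact ((hperturbed ε).mul ((hperturbed ε).log fun x =>
      (hperturbed_pos ε hε x).ne')).aestronglyMeasurable
  · simp only [zero_mul, add_zero]
    exact ((hlogρ.add continuous_const).mul hχc).aestronglyMeasurable
  · refine ae_of_all _ fun x ε hε => ?_
    rw [norm_mul, norm_eq_abs, norm_eq_abs]
    gcongr
    calc |log (ρ x + ε * χ x) + 1| ≤ |log (ρ x + ε * χ x)| + 1 := by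
          simpa using abs_add_le (log (ρ x + ε * χ x)) 1
      _ ≤ |log (ρ x)| + log 2 + 1 := by
          gcongr; exact abs_log_add_le_of_abs_le_half (hρpos x) (hε x)
  · exact ((hlogρ.abs.add continuous_const).add continuous_const).mul hχc.abs
      |>.integrable_of_hasCompactSupport hχsupp.abs.mul_left
  · refine ae_of_all _ fun x ε hε => ?_
    have haffine : HasDerivAt (fun ε : ℝ => ρ x + ε * χ x) (χ x) ε := by
      simpa using ((hasDerivAt_id ε).mul_const (χ x)).const_add (ρ x)
    exact (hasDerivAt_mul_log (hperturbed_pos ε hε x).ne').comp ε haffine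

end Perturbation

theorem first_variation_entropy_regularized_wasserstein_general (n : ℕ)
    (γ : ℝ)
    (ρ dstar χ : (Fin n → ℝ) → ℝ)
    (hρc : Continuous ρ) (hρpos : ∀ x, 0 < ρ x)
    (hdc : Continuous dstar)
    (hχc : Continuous χ) (hχsupp : HasCompactSupport χ)
    (hint1 : Integrable (fun x => dstar x * ρ x) volume)
    (hint2 : Integrable (fun x => ρ x * Real.log (ρ x)) volume) :
    HasDerivAt
      (fun ε : ℝ =>
        -(∫ x, dstar x * (ρ x + ε * χ x)) +
          γ * ∫ x, (ρ x + ε * χ x) * Real.log (ρ x + ε * χ x))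
      (∫ x, (-dstar x + γ * Real.log (ρ x) + γ) * χ x) 0 := by
  have hdχ : Integrable (fun x => dstar x * χ x) volume :=
    (hdc.mul hχc).integrable_of_hasCompactSupport hχsupp.mul_left
  have hlogχ : Integrable (fun x => (Real.log (ρ x) + 1) * χ x) volume :=
    ((hρc.log fun x => (hρpos x).ne').add continuous_const).mul hχc
      |>.integrable_of_hasCompactSupport hχsupp.mul_left
  have hcritic : HasDerivAt (fun ε : ℝ => ∫ x, dstar x * (ρ x + ε * χ x))
      (∫ x, dstar x * χ x) 0 := by
    convert hasDerivAt_integral_add_mul hint1 hdχ 0 using 4 with ε x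
    ring
  refine (hcritic.neg.add
    ((hasDerivAt_integral_mul_log_add_mul hρc hρpos hχc hχsupp hint2).const_mul γ)).congr_deriv ?_
  have hsplit : (fun x => (-dstar x + γ * Real.log (ρ x) + γ) * χ x) =
      fun x => -(dstar x * χ x) + γ * ((Real.log (ρ x) + 1) * χ x) := by
    ext x; ring
  rw [hsplit, integral_add (f := fun x => -(dstar x * χ x)) hdχ.neg (hlogχ.const_mul γ),
    integral_neg, integral_const_mul]

/-- First variation of the entropy-regularized 1-Wasserstein functional (with fixed
optimal critic `d*`): the map `ε ↦ -∫ d* (ρ+εχ) + γ ∫ (ρ+εχ) log(ρ+εχ)` has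
derivative `∫ (-d* + γ log ρ + γ) χ` at `ε = 0`. -/
theorem first_variation_entropy_regularized_wasserstein (n : ℕ) (hn : 1 ≤ n)
    (γ : ℝ) (hγ : 0 ≤ γ)
    (ρ dstar χ : (Fin n → ℝ) → ℝ)
    (hρc : Continuous ρ) (hρpos : ∀ x, 0 < ρ x)
    (hdc : Continuous dstar)
    (hχc : Continuous χ) (hχsupp : HasCompactSupport χ)
    (hint1 : Integrable (fun x => dstar x * ρ x) volume)
    (hint2 : Integrable (fun x => ρ x * Real.log (ρ x)) volume) :
    HasDerivAt
      (fun ε : ℝ =>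
        -(∫ x, dstar x * (ρ x + ε * χ x)) +
          γ * ∫ x, (ρ x + ε * χ x) * Real.log (ρ x + ε * χ x))
      (∫ x, (-dstar x + γ * Real.log (ρ x) + γ) * χ x) 0 :=
  first_variation_entropy_regularized_wasserstein_general n γ ρ dstar χ hρc hρpos hdc hχc hχsupp
    hint1 hint2
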